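/- Let K be a field and M a finite J-trivial monoid with set of idempotents E(M). Let (f_e)_{e ∈ E(M)} be any family of elements of MonoidAlgebra K M such that: (i) Σ_e f_e = 1 and f_e f_{e'} = δ_{e,e'} f_e; (ii) f_e − g_e ∈ rad(MonoidAlgebra K M), where (g_e) is the unique family in the K-span of E(M) with e = Σ_{e' ∈ E(M), e' ≤_J e} g_{e'} for all e ∈ E(M); (iii) f_e − e lies in the K-span of {x ∈ M : x <_J e}. Then for all idempotents i, j ∈ E(M), the K-dimension of the subspace f_i · (MonoidAlgebra K M) · f_j equals the cardinality of the set {x ∈ M : lfix(x) = i and rfix(x) = j}. -/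

import Mathlib

/-!
The elements `b x = f (lfix x) * x * f (rfix x)` of `K[M]` are unitriangular with respect to the
basis `M` and the `J`-order: `b x - x` is supported on elements strictly `J`-below `x`, because
`p * x * q = x` forces `lfix x ≤_J p` and `rfix x ≤_J q`. Hence the `b x` form a basis of `K[M]`.
As the `f e` are orthogonal idempotents, `a ↦ f i * a * f j` fixes `b x` when `lfix x = i` and
`rfix x = j`, and kills it otherwise, so its range has a basis indexed by exactly those `x`.
-/

/-- The `J`-preorder on a monoid: `x ≤_J y` iff `x = u * y * v` for some `u, v`. -/
def leJ {M : Type*} [Monoid M] (x y : M) : Prop := ∃ u v : M, x = u * y * v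

/-- A monoid is `J`-trivial if `M x M = M y M` implies `x = y`. -/
def JTrivial (M : Type*) [Monoid M] : Prop :=
  ∀ x y : M, {z : M | ∃ u v : M, z = u * x * v} = {z : M | ∃ u v : M, z = u * y * v} → x = y

open Classical

/-- `lfix x`: the `≤_J`-minimum of the idempotents `e` with `e * x = x`
(it exists in a finite `J`-trivial monoid). -/
noncomputable def lfixF {M : Type*} [Monoid M] (x : M) : M :=
  if h : ∃ e : M, (IsIdempotentElem e ∧ e * x = x) ∧
      ∀ f : M, IsIdempotentElem f → f * x = x → leJ e f
  then h.choose else 1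

/-- `rfix x`: the `≤_J`-minimum of the idempotents `e` with `x * e = x`
(it exists in a finite `J`-trivial monoid). -/
noncomputable def rfixF {M : Type*} [Monoid M] (x : M) : M :=
  if h : ∃ e : M, (IsIdempotentElem e ∧ x * e = x) ∧
      ∀ f : M, IsIdempotentElem f → x * f = x → leJ e f
  then h.choose else 1

section JOrder

variable {M : Type*} [Monoid M]

def ltJ (x y : M) : Prop := leJ x y ∧ x ≠ y

lemma leJ_trans {x y z : M} (hxy : leJ x y) (hyz : leJ y z) : leJ x z := by
  obtain ⟨u, v, rfl⟩ := hxy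
  obtain ⟨p, q, rfl⟩ := hyz
  exact ⟨u * p, q * v, by simp only [mul_assoc]⟩

lemma leJ_mul_mul (u x v : M) : leJ (u * x * v) x := ⟨u, v, rfl⟩

lemma leJ_mul_right (x y : M) : leJ (x * y) x := ⟨1, y, by rw [one_mul]⟩

lemma leJ_mul_left (x y : M) : leJ (x * y) y := ⟨x, 1, by rw [mul_one]⟩

lemma leJ_pow {u : M} {n : ℕ} (hn : n ≠ 0) : leJ (u ^ n) u :=
  ⟨u ^ (n - 1), 1, by rw [mul_one, ← pow_succ, Nat.sub_one_add_one hn]⟩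

lemma JTrivial.leJ_antisymm (hJ : JTrivial M) {x y : M} (hxy : leJ x y) (hyx : leJ y x) :
    x = y :=
  hJ x y <| Set.ext fun _ =>
    ⟨fun h => leJ_trans h hxy, fun h => leJ_trans h hyx⟩

lemma JTrivial.wellFounded_ltJ [Finite M] (hJ : JTrivial M) : WellFounded (ltJ (M := M)) :=
  haveI : IsTrans M ltJ := ⟨fun x y z hxy hyz =>
    ⟨leJ_trans hxy.1 hyz.1, by
      rintro rfl
      exact hxy.2 (hJ.leJ_antisymm hxy.1 hyz.1)⟩⟩
  haveI : Std.Irrefl (ltJ (M := M)) := ⟨fun _ h => h.2 rfl⟩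
  Finite.wellFounded_of_trans_of_irrefl _

lemma JTrivial.exists_leJ_minimum [Finite M] (hJ : JTrivial M) {P : M → Prop} (hP : ∃ e, P e)
    (hdir : ∀ e f, P e → P f → ∃ d, P d ∧ leJ d e ∧ leJ d f) :
    ∃ e, P e ∧ ∀ f, P f → leJ e f := by
  obtain ⟨e, he, hmin⟩ := hJ.wellFounded_ltJ.has_min {e | P e} hP
  refine ⟨e, he, fun f hf => ?_⟩
  obtain ⟨d, hd, hde, hdf⟩ := hdir e f he hf
  obtain rfl : d = e := by_contra fun hne => hmin d hd ⟨hde, hne⟩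
  exact hdf

end JOrder

section Idempotents

variable {M : Type*} [Monoid M]

lemma exists_pow_isIdempotentElem [Finite M] (a : M) : ∃ n ≠ 0, IsIdempotentElem (a ^ n) := by
  -- Ellis–Numakura for the positive powers of `a`, a compact subsemigroup in the discrete topology
  let : TopologicalSpace M := ⊥
  have : DiscreteTopology M := ⟨rfl⟩
  obtain ⟨_, ⟨n, rfl⟩, h⟩ := exists_idempotent_in_compact_subsemigroup
    (fun _ => continuous_of_discreteTopology) (Set.range fun n : ℕ => a ^ (n + 1))
    ⟨a, 0, pow_one a⟩ (Set.toFinite _).isCompact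
    (by rintro _ ⟨m, rfl⟩ _ ⟨n, rfl⟩; exact ⟨m + n + 1, by rw [← pow_add]; ring_nf⟩)
  exact ⟨n + 1, n.succ_ne_zero, h⟩

lemma pow_mul_mul_pow_of_mul_mul_eq {u x v : M} (h : u * x * v = x) (n : ℕ) :
    u ^ n * x * v ^ n = x := by
  induction n with
  | zero => simp
  | succ n ih =>
    calc u ^ (n + 1) * x * v ^ (n + 1) = u ^ n * (u * x * v) * v ^ n := by
          rw [pow_succ, pow_succ']; simp only [mul_assoc]
      _ = x := by rw [h, ih]

lemma exists_isIdempotentElem_leJ_of_mul_mul_eq_left [Finite M] {u x v : M} (h : u * x * v = x) :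
    ∃ e, IsIdempotentElem e ∧ leJ e u ∧ e * x = x := by
  obtain ⟨n, hn, he⟩ := exists_pow_isIdempotentElem u
  have hfix := pow_mul_mul_pow_of_mul_mul_eq h n
  refine ⟨u ^ n, he, leJ_pow hn, ?_⟩
  rw [← hfix, ← mul_assoc, ← mul_assoc, he.eq]

lemma exists_isIdempotentElem_leJ_of_mul_mul_eq_right [Finite M] {u x v : M}
    (h : u * x * v = x) : ∃ e, IsIdempotentElem e ∧ leJ e v ∧ x * e = x := by
  obtain ⟨n, hn, he⟩ := exists_pow_isIdempotentElem v
  have hfix := pow_mul_mul_pow_of_mul_mul_eq h n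
  refine ⟨v ^ n, he, leJ_pow hn, ?_⟩
  rw [← hfix, mul_assoc _ (v ^ n), he.eq]

end Idempotents

namespace JTrivial

variable {M : Type*} [Monoid M] [Finite M] (hJ : JTrivial M)
include hJ

lemma lfixF_spec (x : M) : (IsIdempotentElem (lfixF x) ∧ lfixF x * x = x) ∧
    ∀ f : M, IsIdempotentElem f → f * x = x → leJ (lfixF x) f := by
  have h : ∃ e : M, (IsIdempotentElem e ∧ e * x = x) ∧
      ∀ f : M, IsIdempotentElem f → f * x = x → leJ e f := by
    obtain ⟨e, he, hmin⟩ := hJ.exists_leJ_minimum (P := fun e => IsIdempotentElem e ∧ e * x = x)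
      ⟨1, IsIdempotentElem.one, one_mul x⟩
      fun e f he hf => by
        obtain ⟨d, hd, hdef, hdx⟩ := exists_isIdempotentElem_leJ_of_mul_mul_eq_left (v := 1)
          (by rw [mul_one, mul_assoc, hf.2, he.2] : e * f * x * 1 = x)
        exact ⟨d, ⟨hd, hdx⟩, leJ_trans hdef (leJ_mul_right e f),
          leJ_trans hdef (leJ_mul_left e f)⟩
    exact ⟨e, he, fun f hf hfx => hmin f ⟨hf, hfx⟩⟩
  rw [lfixF, dif_pos h]
  exact h.choose_spec

lemma isIdempotentElem_lfixF (x : M) : IsIdempotentElem (lfixF x) := (hJ.lfixF_spec x).1.1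

lemma lfixF_mul_self (x : M) : lfixF x * x = x := (hJ.lfixF_spec x).1.2

lemma rfixF_spec (x : M) : (IsIdempotentElem (rfixF x) ∧ x * rfixF x = x) ∧
    ∀ f : M, IsIdempotentElem f → x * f = x → leJ (rfixF x) f := by
  have h : ∃ e : M, (IsIdempotentElem e ∧ x * e = x) ∧
      ∀ f : M, IsIdempotentElem f → x * f = x → leJ e f := by
    obtain ⟨e, he, hmin⟩ := hJ.exists_leJ_minimum (P := fun e => IsIdempotentElem e ∧ x * e = x)
      ⟨1, IsIdempotentElem.one, mul_one x⟩
      fun e f he hf => by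
        obtain ⟨d, hd, hdfe, hdx⟩ := exists_isIdempotentElem_leJ_of_mul_mul_eq_right (u := 1)
          (by rw [one_mul, ← mul_assoc, hf.2, he.2] : 1 * x * (f * e) = x)
        exact ⟨d, ⟨hd, hdx⟩, leJ_trans hdfe (leJ_mul_left f e),
          leJ_trans hdfe (leJ_mul_right f e)⟩
    exact ⟨e, he, fun f hf hfx => hmin f ⟨hf, hfx⟩⟩
  rw [rfixF, dif_pos h]
  exact h.choose_spec

lemma isIdempotentElem_rfixF (x : M) : IsIdempotentElem (rfixF x) := (hJ.rfixF_spec x).1.1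

lemma mul_rfixF_self (x : M) : x * rfixF x = x := (hJ.rfixF_spec x).1.2

lemma ltJ_mul_mul_of_ltJ_lfixF {p x : M} (hp : ltJ p (lfixF x)) (q : M) :
    ltJ (p * x * q) x := by
  refine ⟨leJ_mul_mul p x q, fun hfix => hp.2 (hJ.leJ_antisymm hp.1 ?_)⟩
  obtain ⟨e, he, hep, hex⟩ := exists_isIdempotentElem_leJ_of_mul_mul_eq_left hfix
  exact leJ_trans ((hJ.lfixF_spec x).2 e he hex) hep

lemma ltJ_mul_of_ltJ_rfixF {x q : M} (hq : ltJ q (rfixF x)) : ltJ (x * q) x := by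
  refine ⟨leJ_mul_right x q, fun hfix => hq.2 (hJ.leJ_antisymm hq.1 ?_)⟩
  obtain ⟨e, he, heq, hxe⟩ :=
    exists_isIdempotentElem_leJ_of_mul_mul_eq_right (by rwa [one_mul] : 1 * x * q = x)
  exact leJ_trans ((hJ.rfixF_spec x).2 e he hxe) heq

end JTrivial

section LinearAlgebra

variable {ι R V : Type*}

lemma Module.Basis.span_range_eq_top_of_sub_mem_span [Ring R] [AddCommGroup V] [Module R V]
    (B : Module.Basis ι R V) {r : ι → ι → Prop} (hr : WellFounded r) {v : ι → V}
    (hv : ∀ i, v i - B i ∈ Submodule.span R (B '' {j | r j i})) :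
    Submodule.span R (Set.range v) = ⊤ := by
  have hB : ∀ i, B i ∈ Submodule.span R (Set.range v) := fun i =>
    hr.induction i fun i ih => by
      have hlower : Submodule.span R (B '' {j | r j i}) ≤ Submodule.span R (Set.range v) :=
        Submodule.span_le.2 (by rintro _ ⟨j, hj, rfl⟩; exact ih j hj)
      simpa using sub_mem (Submodule.subset_span (Set.mem_range_self i)) (hlower (hv i))
  rw [eq_top_iff, ← B.span_eq, Submodule.span_le]
  rintro _ ⟨i, rfl⟩
  exact hB i

lemma Module.Basis.finrank_range_eq_card [Finite ι] [Field R] [AddCommGroup V] [Module R V]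
    (B : Module.Basis ι R V) {P : V →ₗ[R] V} {p : ι → Prop} (h₁ : ∀ i, p i → P (B i) = B i)
    (h₀ : ∀ i, ¬ p i → P (B i) = 0) :
    Module.finrank R (LinearMap.range P) = Nat.card {i // p i} := by
  have hrange : LinearMap.range P =
      Submodule.span R (Set.range (B ∘ Subtype.val : {i // p i} → V)) := by
    apply le_antisymm
    · rw [LinearMap.range_eq_map, ← B.span_eq, Submodule.map_span, Submodule.span_le]
      rintro _ ⟨_, ⟨i, rfl⟩, rfl⟩
      by_cases hi : p i
      · rw [h₁ i hi]
        exact Submodule.subset_span ⟨⟨i, hi⟩, rfl⟩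
      · rw [h₀ i hi]
        exact zero_mem _
    · rw [Submodule.span_le]
      rintro _ ⟨i, rfl⟩
      exact ⟨B i, h₁ i i.2⟩
  have := Fintype.ofFinite {i // p i}
  rw [hrange, finrank_span_eq_card (B.linearIndependent.comp _ Subtype.val_injective),
    Nat.card_eq_fintype_card]

end LinearAlgebra

namespace MonoidAlgebra

open scoped Pointwise

variable {k G : Type*} [Semiring k]

lemma mul_mem_supported [Mul G] {s t : Set G} {a b : MonoidAlgebra k G}
    (ha : a ∈ supported k k s) (hb : b ∈ supported k k t) : a * b ∈ supported k k (s * t) := by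
  classical
  rw [mem_supported] at *
  refine (Finset.coe_subset.2 (support_coeff_mul_subset a b)).trans ?_
  rw [Finset.coe_mul]
  exact Set.mul_subset_mul ha hb

lemma of_mem_supported_singleton [MulOneClass G] (x : G) : of k G x ∈ supported k k {x} :=
  mem_supported.2 <| by
    rw [Set.subset_singleton_iff]
    simp [Finsupp.single_apply_ne_zero]

lemma span_image_of_eq_supported (k) [CommSemiring k] [MulOneClass G] (s : Set G) :
    Submodule.span k ((fun z => (of k G z : MonoidAlgebra k G)) '' s) = supported k k s :=
  (supported_eq_span_single k s).symm

end MonoidAlgebra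

namespace JTrivial

open MonoidAlgebra
open scoped Pointwise

variable {K M : Type*} [Field K] [Monoid M] [Finite M] (hJ : JTrivial M)
  (f : {e : M // IsIdempotentElem e} → MonoidAlgebra K M)

noncomputable def sandwich (x : M) : MonoidAlgebra K M :=
  f ⟨lfixF x, hJ.isIdempotentElem_lfixF x⟩ * of K M x * f ⟨rfixF x, hJ.isIdempotentElem_rfixF x⟩

lemma sandwich_sub_mem_supported
    (hf : ∀ e : {e : M // IsIdempotentElem e},
      f e - of K M e ∈ Submodule.span K ((fun z => of K M z) '' {x | ltJ x e}))
    (x : M) : hJ.sandwich f x - of K M x ∈ supported K K {y | ltJ y x} := by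
  set l : {e : M // IsIdempotentElem e} := ⟨lfixF x, hJ.isIdempotentElem_lfixF x⟩
  set r : {e : M // IsIdempotentElem e} := ⟨rfixF x, hJ.isIdempotentElem_rfixF x⟩
  have hl : f l - of K M l ∈ supported K K {p | ltJ p (lfixF x)} :=
    span_image_of_eq_supported K (G := M) _ ▸ hf l
  have hr : f r - of K M r ∈ supported K K {q | ltJ q (rfixF x)} :=
    span_image_of_eq_supported K (G := M) _ ▸ hf r
  have hsplit : hJ.sandwich f x - of K M x
      = (f l - of K M l) * of K M x * f r + of K M x * (f r - of K M r) := by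
    rw [sandwich, sub_mul, sub_mul, mul_sub, ← map_mul, ← map_mul, hJ.lfixF_mul_self,
      hJ.mul_rfixF_self, sub_add_sub_cancel]
  have hleft : (f l - of K M l) * of K M x * f r ∈
      supported K K ({p | ltJ p (lfixF x)} * {x} * Set.univ) :=
    mul_mem_supported (mul_mem_supported hl (of_mem_supported_singleton x))
      (mem_supported.2 (Set.subset_univ _))
  have hright : of K M x * (f r - of K M r) ∈ supported K K ({x} * {q | ltJ q (rfixF x)}) :=
    mul_mem_supported (of_mem_supported_singleton x) hr
  rw [hsplit]
  refine add_mem (supported_mono ?_ hleft) (supported_mono ?_ hright)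
  · rintro _ ⟨_, ⟨p, hp, _, rfl, rfl⟩, q, -, rfl⟩
    exact hJ.ltJ_mul_mul_of_ltJ_lfixF hp q
  · rintro _ ⟨_, rfl, q, hq, rfl⟩
    exact hJ.ltJ_mul_of_ltJ_rfixF hq

section Orthogonal

variable {f} (hf : OrthogonalIdempotents f)
include hf

lemma mul_sandwich_mul_of_eq {i j : {e : M // IsIdempotentElem e}} {x : M}
    (hi : lfixF x = i) (hj : rfixF x = j) : f i * hJ.sandwich f x * f j = hJ.sandwich f x := by
  obtain rfl : i = ⟨lfixF x, hJ.isIdempotentElem_lfixF x⟩ := Subtype.ext hi.symm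
  obtain rfl : j = ⟨rfixF x, hJ.isIdempotentElem_rfixF x⟩ := Subtype.ext hj.symm
  rw [sandwich, ← mul_assoc, ← mul_assoc, (hf.idem _).eq, mul_assoc, (hf.idem _).eq]

lemma mul_sandwich_mul_of_not {i j : {e : M // IsIdempotentElem e}} {x : M}
    (h : ¬(lfixF x = i ∧ rfixF x = j)) : f i * hJ.sandwich f x * f j = 0 := by
  rcases not_and_or.1 h with hi | hj
  · have hil : i ≠ ⟨lfixF x, hJ.isIdempotentElem_lfixF x⟩ :=
      fun h => hi (congrArg Subtype.val h).symm
    rw [sandwich, ← mul_assoc, ← mul_assoc, hf.ortho hil, zero_mul, zero_mul, zero_mul]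
  · have hrj : (⟨rfixF x, hJ.isIdempotentElem_rfixF x⟩ : {e : M // IsIdempotentElem e}) ≠ j :=
      fun h => hj (congrArg Subtype.val h)
    rw [sandwich, mul_assoc, mul_assoc (f _ * _), hf.ortho hrj, mul_zero, mul_zero]

end Orthogonal

end JTrivial

theorem cartan_matrix_count_general (K : Type*) [Field K] {M : Type*} [Monoid M] [Fintype M]
    (hJ : JTrivial M)
    (f : {e : M // IsIdempotentElem e} → MonoidAlgebra K M)
    (hf2 : ∀ e e' : {e : M // IsIdempotentElem e},
      f e * f e' = if e = e' then f e else 0)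
    (hf4 : ∀ e : {e : M // IsIdempotentElem e},
      f e - MonoidAlgebra.of K M (e : M) ∈
        Submodule.span K
          ((fun z : M => (MonoidAlgebra.of K M z : MonoidAlgebra K M)) ''
            {x : M | leJ x (e : M) ∧ x ≠ (e : M)})) :
    ∀ i j : {e : M // IsIdempotentElem e},
      Module.finrank K
        (LinearMap.range
          ((LinearMap.mulRight K (f j)).comp (LinearMap.mulLeft K (f i))))
        = Nat.card {x : M // lfixF x = (i : M) ∧ rfixF x = (j : M)} := by
  intro i j
  have hf : OrthogonalIdempotents f := OrthogonalIdempotents.iff_mul_eq.mpr hf2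
  have hspan : Submodule.span K (Set.range (hJ.sandwich f)) = ⊤ :=
    (MonoidAlgebra.basis M K).span_range_eq_top_of_sub_mem_span hJ.wellFounded_ltJ fun x =>
      (MonoidAlgebra.supported_eq_span_single K _).le (hJ.sandwich_sub_mem_supported f hf4 x)
  let B := basisOfTopLeSpanOfCardEqFinrank _ hspan.ge
    (Module.finrank_eq_card_basis (MonoidAlgebra.basis M K)).symm
  have hB : ⇑B = hJ.sandwich f := coe_basisOfTopLeSpanOfCardEqFinrank ..
  refine B.finrank_range_eq_card (fun x hx => ?_) fun x hx => ?_ <;> rw [hB]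
  · exact hJ.mul_sandwich_mul_of_eq hf hx.1 hx.2
  · exact hJ.mul_sandwich_mul_of_not hf hx

/-- The Cartan matrix of a finite `J`-trivial monoid: for any uni-triangular decomposition
`(f_e)` of the identity of `K[M]` into orthogonal idempotents compatible with the semi-simple
quotient, `dim_K (f_i · K[M] · f_j)` equals the number of elements `x ∈ M` with `lfix x = i`
and `rfix x = j`. -/
theorem cartan_matrix_count (K : Type*) [Field K] {M : Type*} [Monoid M] [Fintype M]
    (hJ : JTrivial M)
    (g : {e : M // IsIdempotentElem e} → MonoidAlgebra K M)
    (hgspan : ∀ e : {e : M // IsIdempotentElem e},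
      g e ∈ Submodule.span K
        ((fun z : M => (MonoidAlgebra.of K M z : MonoidAlgebra K M)) ''
          {z : M | IsIdempotentElem z}))
    (hg : ∀ e : {e : M // IsIdempotentElem e},
      (MonoidAlgebra.of K M (e : M) : MonoidAlgebra K M)
        = ∑ e' ∈ Finset.univ.filter
            (fun e' : {e : M // IsIdempotentElem e} => leJ (e' : M) (e : M)), g e')
    (f : {e : M // IsIdempotentElem e} → MonoidAlgebra K M)
    (hf1 : (∑ e : {e : M // IsIdempotentElem e}, f e) = 1)
    (hf2 : ∀ e e' : {e : M // IsIdempotentElem e},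
      f e * f e' = if e = e' then f e else 0)
    (hf3 : ∀ e : {e : M // IsIdempotentElem e},
      f e - g e ∈ Ideal.jacobson (⊥ : Ideal (MonoidAlgebra K M)))
    (hf4 : ∀ e : {e : M // IsIdempotentElem e},
      f e - MonoidAlgebra.of K M (e : M) ∈
        Submodule.span K
          ((fun z : M => (MonoidAlgebra.of K M z : MonoidAlgebra K M)) ''
            {x : M | leJ x (e : M) ∧ x ≠ (e : M)})) :
    ∀ i j : {e : M // IsIdempotentElem e},
      Module.finrank K
        (LinearMap.range
          ((LinearMap.mulRight K (f j)).comp (LinearMap.mulLeft K (f i))))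
        = Nat.card {x : M // lfixF x = (i : M) ∧ rfixF x = (j : M)} :=
  cartan_matrix_count_general K hJ f hf2 hf4
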